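/- Ping-pong lemma: Let a group G act on a set X, let f1, f2 ∈ G, and suppose there exist four pairwise disjoint nonempty subsets B1⁻, B2⁻, B1⁺, B2⁺ of X such that for i = 1,2, fi maps the complement of Bi⁻ into Bi⁺ and fi⁻¹ maps the complement of Bi⁺ into Bi⁻. Then the subgroup generated by f1 and f2 is free of rank 2. -/

import Mathlib

/-!
Each letter of a reduced word in `f₁^{±1}, f₂^{±1}` sends the complement of its repelling set
(`Bᵢ⁻` for `fᵢ`, `Bᵢ⁺` for `fᵢ⁻¹`) into its attracting set, and the next letter's repelling set
lies in that complement. So a nontrivial word, conjugated if it starts and ends with the same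
generator, maps a nonempty ping-pong set into a disjoint one and is not the identity. Mathlib
proves this for any family of generators (`FreeGroup.injective_lift_of_ping_pong`).
-/

open Pointwise
open scoped Function

namespace FreeGroup

universe u v

variable {ι : Type v} {κ : Type*} {G : Type u} [Group G]

theorem lift_comp_freeGroupCongr (e : κ ≃ ι) (a : ι → G) :
    (lift a).comp (freeGroupCongr e).toMonoidHom = lift (a ∘ e) := by
  ext; simp

theorem injective_lift_comp_equiv_iff (e : κ ≃ ι) (a : ι → G) :
    Function.Injective (lift (a ∘ e)) ↔ Function.Injective (lift a) := by
  rw [← lift_comp_freeGroupCongr, MonoidHom.coe_comp]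
  exact (freeGroupCongr e).toEquiv.injective_comp _

-- Mathlib's version requires the index type to live in the universe of `G`.
theorem injective_lift_of_ping_pong_of_small [Small.{u} ι] [Nontrivial ι] {α : Type*}
    [MulAction G α]
    (a : ι → G) (X Y : ι → Set α) (hXnonempty : ∀ i, (X i).Nonempty)
    (hXdisj : Pairwise (Disjoint on X)) (hYdisj : Pairwise (Disjoint on Y))
    (hXYdisj : ∀ i j, Disjoint (X i) (Y j))
    (hX : ∀ i, a i • (Y i)ᶜ ⊆ X i) (hY : ∀ i, (a i)⁻¹ • (X i)ᶜ ⊆ Y i) :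
    Function.Injective (lift a) := by
  let e := (equivShrink ι).symm
  have : Nontrivial (Shrink.{u} ι) := e.nontrivial
  rw [← injective_lift_comp_equiv_iff e]
  have hdisj {Z : ι → Set α} (h : Pairwise (Disjoint on Z)) :
      Pairwise (Disjoint on (Z ∘ e)) :=
    h.comp_of_injective e.injective
  exact injective_lift_of_ping_pong (a ∘ e) (X ∘ e) (Y ∘ e)
    (fun i => hXnonempty _) (hdisj hXdisj) (hdisj hYdisj) (fun i j => hXYdisj _ _)
    (fun i => hX _) (fun i => hY _)

end FreeGroup

theorem pingPong_free_of_rank_two_general {G X : Type*} [Group G] [MulAction G X]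
    (f₁ f₂ : G) (B₁m B₂m B₁p B₂p : Set X)
    (h₁p : B₁p.Nonempty) (h₂p : B₂p.Nonempty)
    (hdisj : Pairwise (Function.onFun Disjoint ![B₁m, B₂m, B₁p, B₂p]))
    (hf₁ : ∀ x : X, x ∉ B₁m → f₁ • x ∈ B₁p)
    (hf₁' : ∀ x : X, x ∉ B₁p → f₁⁻¹ • x ∈ B₁m)
    (hf₂ : ∀ x : X, x ∉ B₂m → f₂ • x ∈ B₂p)
    (hf₂' : ∀ x : X, x ∉ B₂p → f₂⁻¹ • x ∈ B₂m) :
    Function.Injective ⇑(FreeGroup.lift (fun b : Bool => if b then f₁ else f₂)) := by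
  have h01 : Disjoint B₁m B₂m := hdisj (by decide : (0 : Fin 4) ≠ 1)
  have h02 : Disjoint B₁m B₁p := hdisj (by decide : (0 : Fin 4) ≠ 2)
  have h03 : Disjoint B₁m B₂p := hdisj (by decide : (0 : Fin 4) ≠ 3)
  have h12 : Disjoint B₂m B₁p := hdisj (by decide : (1 : Fin 4) ≠ 2)
  have h13 : Disjoint B₂m B₂p := hdisj (by decide : (1 : Fin 4) ≠ 3)
  have h23 : Disjoint B₁p B₂p := hdisj (by decide : (2 : Fin 4) ≠ 3)
  refine FreeGroup.injective_lift_of_ping_pong_of_small _ (fun b => cond b B₁p B₂p)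
    (fun b => cond b B₁m B₂m) (Bool.forall_bool.2 ⟨h₂p, h₁p⟩) (pairwise_disjoint_on_bool.2 h23)
    (pairwise_disjoint_on_bool.2 h01) ?_ ?_ ?_
  · simp [Bool.forall_bool, h02.symm, h03.symm, h12.symm, h13.symm]
  · simpa [Bool.forall_bool, Set.smul_set_subset_iff] using ⟨hf₂, hf₁⟩
  · simpa [Bool.forall_bool, Set.smul_set_subset_iff] using ⟨hf₂', hf₁'⟩

/-- Ping-pong lemma: if `f₁, f₂` in a group acting on `X` admit four pairwise
disjoint nonempty ping-pong sets, then the subgroup they generate is free of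
rank 2, i.e. the natural map from the free group on two generators is injective. -/
theorem pingPong_free_of_rank_two {G X : Type*} [Group G] [MulAction G X]
    (f₁ f₂ : G) (B₁m B₂m B₁p B₂p : Set X)
    (h₁m : B₁m.Nonempty) (h₂m : B₂m.Nonempty) (h₁p : B₁p.Nonempty) (h₂p : B₂p.Nonempty)
    (hdisj : Pairwise (Function.onFun Disjoint ![B₁m, B₂m, B₁p, B₂p]))
    (hf₁ : ∀ x : X, x ∉ B₁m → f₁ • x ∈ B₁p)
    (hf₁' : ∀ x : X, x ∉ B₁p → f₁⁻¹ • x ∈ B₁m)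
    (hf₂ : ∀ x : X, x ∉ B₂m → f₂ • x ∈ B₂p)
    (hf₂' : ∀ x : X, x ∉ B₂p → f₂⁻¹ • x ∈ B₂m)
    (hbase : ∃ x : X, x ∉ B₁m ∧ x ∉ B₂m ∧ x ∉ B₁p ∧ x ∉ B₂p) :
    Function.Injective ⇑(FreeGroup.lift (fun b : Bool => if b then f₁ else f₂)) :=
  pingPong_free_of_rank_two_general f₁ f₂ B₁m B₂m B₁p B₂p h₁p h₂p hdisj hf₁ hf₁' hf₂ hf₂'
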